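/- arXiv:1206.2231 — 2 statements merged into one kernel-verified Lean document; each statement's English description precedes it below -/
import Mathlib

section
/- If a natural number N is a sum of two squares of rational numbers, then N is a sum of two squares of integers. -/
/-!
Clearing denominators turns `N = p² + q²` into `d² N = a² + b²` with integers `a, b` and `d ≠ 0`.
By Fermat's characterisation, a natural number is a sum of two integer squares iff every prime
`≡ 3 (mod 4)` divides it to an even power; multiplying by the square `d²` changes every such
exponent by an even amount, so `N` satisfies the criterion as well.
-/

theorem Nat.exists_sq_add_sq_of_sq_mul {d n : ℕ} (hd : d ≠ 0)
    (h : ∃ x y : ℕ, d ^ 2 * n = x ^ 2 + y ^ 2) : ∃ x y : ℕ, n = x ^ 2 + y ^ 2 := by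
  rcases n.eq_zero_or_pos with rfl | hn
  · exact ⟨0, 0, rfl⟩
  have hd2 : d ^ 2 ≠ 0 := pow_ne_zero 2 hd
  rw [Nat.eq_sq_add_sq_iff] at h ⊢
  intro r hr hr4
  have : Fact r.Prime := ⟨Nat.prime_of_mem_primeFactors hr⟩
  have hr' : r ∈ (d ^ 2 * n).primeFactors := by
    rw [Nat.primeFactors_mul hd2 hn.ne']
    exact Finset.mem_union_right _ hr
  have heven := h r hr' hr4
  rw [padicValNat.mul hd2 hn.ne', padicValNat.pow d 2] at heven
  exact (Nat.even_add.mp heven).mp (even_two_mul _)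

theorem Rat.exists_sq_mul_sq_add_sq_eq (p q : ℚ) :
    ∃ d : ℕ, d ≠ 0 ∧ ∃ a b : ℤ, (d : ℚ) ^ 2 * (p ^ 2 + q ^ 2) = a ^ 2 + b ^ 2 := by
  refine ⟨p.den * q.den, Nat.mul_ne_zero p.den_nz q.den_nz, p.num * q.den, q.num * p.den, ?_⟩
  push_cast
  rw [← Rat.mul_den_eq_num p, ← Rat.mul_den_eq_num q]
  ring

theorem sum_two_rat_squares_to_int_squares (N : ℕ) (p q : ℚ)
    (h : (N : ℚ) = p ^ 2 + q ^ 2) :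
    ∃ u v : ℤ, (N : ℤ) = u ^ 2 + v ^ 2 := by
  obtain ⟨d, hd, a, b, hab⟩ := Rat.exists_sq_mul_sq_add_sq_eq p q
  have hdN : d ^ 2 * N = a.natAbs ^ 2 + b.natAbs ^ 2 := by
    rw [← h] at hab
    zify
    rw [sq_abs, sq_abs]
    exact_mod_cast hab
  obtain ⟨x, y, hxy⟩ := Nat.exists_sq_add_sq_of_sq_mul hd ⟨_, _, hdN⟩
  exact ⟨x, y, by exact_mod_cast hxy⟩
end

section
/- If θ ∈ (0, π) is a rational multiple of π and cos θ is rational, then θ is an integer multiple of 2π/n for some n ∈ {4, 5, 8, 10, 12} (equivalently, cos θ ∈ {0, ±1/2, ±1}). -/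
open Real Complex Polynomial

private lemma int_of_pow_eq_one {z : ℂ} {n : ℕ} (hn : n ≠ 0) (hz : z ^ n = 1) :
    IsIntegral ℤ z := by
  refine ⟨X ^ n - C 1, monic_X_pow_sub_C 1 hn, ?_⟩
  simp [hz]

theorem niven_rational_cos (θ : ℝ) (h0 : 0 < θ) (hπ : θ < Real.pi)
    (hrat : ∃ r : ℚ, θ = r * Real.pi) (hcos : ∃ c : ℚ, Real.cos θ = c) :
    ∃ n ∈ ({4, 5, 8, 10, 12} : Finset ℕ), ∃ k : ℕ, θ = k * (2 * Real.pi / n) := by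
  obtain ⟨r, hr⟩ := hrat
  obtain ⟨c, hc⟩ := hcos
  -- ζ = e^{iθ} is a root of unity
  set ζ : ℂ := Complex.exp (θ * Complex.I) with hζ
  have hq : (r.den : ℝ) * θ = (r.num : ℝ) * Real.pi := by
    have h1 : (r : ℝ) * r.den = r.num := by exact_mod_cast r.mul_den_eq_num
    rw [hr, show (r.den : ℝ) * ((r : ℝ) * Real.pi) = ((r : ℝ) * r.den) * Real.pi by ring, h1]
  have hpow : ζ ^ (2 * r.den) = 1 := by
    rw [hζ, ← Complex.exp_nat_mul]
    have : (↑(2 * r.den) : ℂ) * (↑θ * Complex.I) = (r.num : ℂ) * (2 * Real.pi * Complex.I) := by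
      push_cast
      rw [show (2 : ℂ) * r.den * (θ * Complex.I) = ((r.den : ℝ) * θ : ℝ) * (2 * Complex.I) by
        push_cast; ring, hq]
      push_cast; ring
    rw [this, Complex.exp_int_mul_two_pi_mul_I]
  have hζne : ζ ≠ 0 := Complex.exp_ne_zero _
  have hpowinv : ζ⁻¹ ^ (2 * r.den) = 1 := by
    rw [inv_pow, hpow, inv_one]
  have hden : 2 * r.den ≠ 0 := by positivity
  have hint : IsIntegral ℤ (ζ + ζ⁻¹) :=
    (int_of_pow_eq_one hden hpow).add (int_of_pow_eq_one hden hpowinv)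
  -- ζ + ζ⁻¹ = 2 cos θ
  have hsum : ζ + ζ⁻¹ = ((2 * c : ℚ) : ℂ) := by
    rw [hζ, ← Complex.exp_neg]
    have : Complex.exp (↑θ * Complex.I) + Complex.exp (-(↑θ * Complex.I)) =
        2 * Complex.cos θ := by
      rw [Complex.cos]; ring_nf
    rw [this, ← Complex.ofReal_cos, hc]
    push_cast; ring
  rw [hsum] at hint
  -- so 2c is a rational algebraic integer, hence an integer
  have hint' : IsIntegral ℤ (2 * c : ℚ) := by
    rw [show ((2 * c : ℚ) : ℂ) = algebraMap ℚ ℂ (2 * c) by simp] at hint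
    exact (isIntegral_algebraMap_iff (algebraMap ℚ ℂ).injective).mp hint
  obtain ⟨m, hm⟩ := IsIntegrallyClosed.isIntegral_iff.mp hint'
  have hm2 : (m : ℚ) = 2 * c := by simpa using hm
  have hm' : (m : ℝ) = 2 * Real.cos θ := by
    rw [hc]; exact_mod_cast hm2
  -- bound m
  have hcos_le : Real.cos θ ≤ 1 := Real.cos_le_one θ
  have hcos_ge : -1 ≤ Real.cos θ := Real.neg_one_le_cos θ
  have hm_lb : (-2 : ℤ) ≤ m := by
    have : (-2 : ℝ) ≤ (m : ℝ) := by rw [hm']; linarith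
    exact_mod_cast this
  have hm_ub : m ≤ 2 := by
    have : (m : ℝ) ≤ 2 := by rw [hm']; linarith
    exact_mod_cast this
  have hθmem : θ ∈ Set.Icc 0 Real.pi := ⟨h0.le, hπ.le⟩
  have hpi := Real.pi_pos
  interval_cases m
  all_goals norm_num at hm'
  · -- cos θ = -1, so θ = π, contradiction
    exfalso
    have : Real.cos θ = Real.cos Real.pi := by rw [Real.cos_pi]; linarith
    have := Real.injOn_cos hθmem ⟨hpi.le, le_refl _⟩ this
    linarith
  · -- cos θ = -1/2, θ = 2π/3
    have hval : Real.cos (2 * Real.pi / 3) = -(1/2) := by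
      rw [show 2 * Real.pi / 3 = Real.pi - Real.pi / 3 by ring, Real.cos_pi_sub,
        Real.cos_pi_div_three]
    have : Real.cos θ = Real.cos (2 * Real.pi / 3) := by rw [hval]; linarith
    have hθeq := Real.injOn_cos hθmem ⟨by positivity, by linarith⟩ this
    refine ⟨12, by decide, 4, ?_⟩
    rw [hθeq]; push_cast; ring
  · -- cos θ = 0, θ = π/2
    have : Real.cos θ = Real.cos (Real.pi / 2) := by rw [Real.cos_pi_div_two]; linarith
    have hθeq := Real.injOn_cos hθmem ⟨by positivity, by linarith⟩ this
    refine ⟨4, by decide, 1, ?_⟩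
    rw [hθeq]; push_cast; ring
  · -- cos θ = 1/2, θ = π/3
    have : Real.cos θ = Real.cos (Real.pi / 3) := by rw [Real.cos_pi_div_three]; linarith
    have hθeq := Real.injOn_cos hθmem ⟨by positivity, by linarith⟩ this
    refine ⟨12, by decide, 2, ?_⟩
    rw [hθeq]; push_cast; ring
  · -- cos θ = 1, so θ = 0, contradiction
    exfalso
    have : Real.cos θ = Real.cos 0 := by rw [Real.cos_zero]; linarith
    have := Real.injOn_cos hθmem ⟨le_refl _, hpi.le⟩ this
    linarith
end
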